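/- Let $\mathcal{K}$ be a simplicial complex on the vertex set $J' \supseteq J$, let $\mathbf{k}$ be a field, and let $\alpha \in \mathbb{Z}_{\geq 0}^{J'}$ be a multidegree with $\alpha_i = 0$ for all $i \notin J$. Then for all $n \geq 0$ there is an isomorphism of multigraded Tor groups $\mathrm{Tor}^{\mathbf{k}[\mathcal{K}]}_{n, 2\alpha}(\mathbf{k},\mathbf{k}) \cong \mathrm{Tor}^{\mathbf{k}[\mathcal{K}_J]}_{n, 2\alpha}(\mathbf{k},\mathbf{k})$, where $\mathcal{K}_J$ is the full subcomplex of $\mathcal{K}$ on $J$. -/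

import Mathlib

/-!
Every monomial occurring in a bar chain of multidegree `α` divides `x^α`, so its support lies
in `supp α ⊆ J`. Hence only the faces of `K` inside `J` matter: `K` and `K_J` have the same bar
basis in multidegree `α`, and the identity on lists is an isomorphism of bar complexes.
-/

/-- `K` is an abstract simplicial complex on the vertex type `V`. -/
def IsComplexOn {V : Type} (K : Set (Finset V)) : Prop :=
  ∅ ∈ K ∧ ∀ s ∈ K, ∀ t, t ⊆ s → t ∈ K

/-- Merge the entries in positions `i` and `i + 1` of a list (used to define the bar
differential via multiplication of adjacent monomials, recorded additively on
exponent vectors). -/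
def mergeList {M : Type} [Add M] : ℕ → List M → List M
  | 0, a :: b :: l => (a + b) :: l
  | i + 1, a :: l => a :: mergeList i l
  | _, l => l

/-- The basis of the multidegree-`α` component of the `n`-th term of the reduced bar
construction of the Stanley--Reisner ring `k[K]`: lists of `n` nonzero monomials (exponent
vectors) whose supports are faces of `K` and whose multidegrees sum to `α`.  (A monomial
of multidegree `β` has internal degree `2β` in `k[K]`; we record half the internal
multidegree throughout.) -/
def BarBasis {V : Type} (K : Set (Finset V)) (α : V →₀ ℕ) (n : ℕ) : Type :=
  { l : List (V →₀ ℕ) //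
      l.length = n ∧ (∀ m ∈ l, m ≠ 0 ∧ m.support ∈ K) ∧ l.sum = α }

/-- The multidegree-`α` component of the `n`-th term of the reduced bar construction. -/
abbrev BarChains (k : Type) [Field k] {V : Type} (K : Set (Finset V)) (α : V →₀ ℕ)
    (n : ℕ) : Type :=
  BarBasis K α n →₀ k

open Classical in
/-- Send a list to the corresponding basis element if it is admissible, and to `0`
otherwise (monomials whose support is not a face vanish in `k[K]`). -/
noncomputable def barProj (k : Type) [Field k] {V : Type} (K : Set (Finset V))
    (α : V →₀ ℕ) (n : ℕ) (l : List (V →₀ ℕ)) : BarChains k K α n :=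
  if h : l.length = n ∧ (∀ m ∈ l, m ≠ 0 ∧ m.support ∈ K) ∧ l.sum = α then
    Finsupp.single ⟨l, h⟩ 1
  else 0

/-- The bar differential `d : B_{n+1} → B_n` in multidegree `α`. -/
noncomputable def barD (k : Type) [Field k] {V : Type} (K : Set (Finset V))
    (α : V →₀ ℕ) (n : ℕ) :
    BarChains k K α (n + 1) →ₗ[k] BarChains k K α n :=
  Finsupp.lift (BarChains k K α n) k (BarBasis K α (n + 1)) fun l =>
    ∑ i ∈ Finset.range n, ((-1 : k) ^ (i + 1)) • barProj k K α n (mergeList i l.1)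

/-- The cycles of the bar complex. -/
noncomputable def barCycles (k : Type) [Field k] {V : Type} (K : Set (Finset V))
    (α : V →₀ ℕ) : (n : ℕ) → Submodule k (BarChains k K α n)
  | 0 => ⊤
  | n + 1 => LinearMap.ker (barD k K α n)


/-- Quotient instance for homology of the bar complex. -/
noncomputable instance barQuot (k : Type) [Field k] {V : Type} (K : Set (Finset V))
    (α : V →₀ ℕ) (n : ℕ) :
    HasQuotient (↥(barCycles k K α n)) (Submodule k ↥(barCycles k K α n)) :=
  Submodule.hasQuotient (R := k) (M := ↥(barCycles k K α n))

/-- The multigraded Tor group `Tor^{k[K]}_{n,2α}(k,k)`, computed as the homology of the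
multidegree-`α` component of the reduced bar construction of `k[K]`. -/
abbrev TorSR (k : Type) [Field k] {V : Type} (K : Set (Finset V)) (α : V →₀ ℕ)
    (n : ℕ) : Type :=
  ↥(barCycles k K α n) ⧸
    Submodule.comap (barCycles k K α n).subtype (LinearMap.range (barD k K α n))

section HomologyOfEquiv

variable {R M N P Q : Type*} [Ring R] [AddCommGroup M] [AddCommGroup N] [AddCommGroup P]
  [AddCommGroup Q] [Module R M] [Module R N] [Module R P] [Module R Q]
  {d : M →ₗ[R] N} {d' : P →ₗ[R] Q} {eM : M ≃ₗ[R] P} {eN : N ≃ₗ[R] Q}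

lemma map_range_of_comp_eq (h : eN.toLinearMap ∘ₗ d = d' ∘ₗ eM.toLinearMap) :
    (LinearMap.range d).map eN.toLinearMap = LinearMap.range d' := by
  rw [← LinearMap.range_comp, h, LinearMap.range_comp_of_range_eq_top _ eM.range]

lemma map_ker_of_comp_eq (h : eN.toLinearMap ∘ₗ d = d' ∘ₗ eM.toLinearMap) :
    (LinearMap.ker d).map eM.toLinearMap = LinearMap.ker d' := by
  rw [← LinearMap.ker_comp_of_ker_eq_bot d eN.ker, h, LinearMap.ker_comp,
    Submodule.map_comap_eq_of_surjective eM.surjective]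

noncomputable def subquotientEquiv (e : N ≃ₗ[R] Q) {Z B : Submodule R N} {Z' B' : Submodule R Q}
    (hZ : Z.map e.toLinearMap = Z') (hB : B.map e.toLinearMap = B') :
    (Z ⧸ B.comap Z.subtype) ≃ₗ[R] (Z' ⧸ B'.comap Z'.subtype) := by
  subst hZ hB
  refine Submodule.Quotient.equiv _ _ (e.submoduleMap Z) ?_
  ext
  simp

end HomologyOfEquiv

section SameFaces

variable (k : Type) [Field k] {V : Type} {K K' : Set (Finset V)} {α : V →₀ ℕ}

lemma barBasis_cond_iff (H : ∀ s ⊆ α.support, s ∈ K ↔ s ∈ K') (l : List (V →₀ ℕ)) (n : ℕ) :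
    (l.length = n ∧ (∀ m ∈ l, m ≠ 0 ∧ m.support ∈ K) ∧ l.sum = α) ↔
      (l.length = n ∧ (∀ m ∈ l, m ≠ 0 ∧ m.support ∈ K') ∧ l.sum = α) := by
  refine and_congr_right fun _ => and_congr_left fun hsum => forall₂_congr fun m hm =>
    and_congr_right fun _ => H _ (Finsupp.support_mono ?_)
  exact hsum ▸ List.single_le_sum (fun _ _ => zero_le) _ hm

lemma barD_single {n : ℕ} (b : BarBasis K α (n + 1)) :
    barD k K α n (Finsupp.single b 1) =
      ∑ i ∈ Finset.range n, ((-1 : k) ^ (i + 1)) • barProj k K α n (mergeList i b.1) := by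
  rw [barD, Finsupp.lift_apply, Finsupp.sum_single_index] <;> simp

variable (H : ∀ s ⊆ α.support, s ∈ K ↔ s ∈ K')

def barBasisEquiv (n : ℕ) : BarBasis K α n ≃ BarBasis K' α n :=
  Equiv.subtypeEquivRight fun l => barBasis_cond_iff H l n

noncomputable def barChainsEquiv (n : ℕ) : BarChains k K α n ≃ₗ[k] BarChains k K' α n :=
  Finsupp.domLCongr (barBasisEquiv H n)

lemma barChainsEquiv_barProj (n : ℕ) (l : List (V →₀ ℕ)) :
    barChainsEquiv k H n (barProj k K α n l) = barProj k K' α n l := by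
  unfold barProj
  by_cases hl : l.length = n ∧ (∀ m ∈ l, m ≠ 0 ∧ m.support ∈ K) ∧ l.sum = α
  · rw [dif_pos hl, dif_pos ((barBasis_cond_iff H l n).mp hl)]
    exact Finsupp.domLCongr_single _ _ _
  · rw [dif_neg hl, dif_neg (mt (barBasis_cond_iff H l n).mpr hl), map_zero]

lemma barChainsEquiv_comp_barD (n : ℕ) :
    (barChainsEquiv k H n).toLinearMap ∘ₗ barD k K α n =
      barD k K' α n ∘ₗ (barChainsEquiv k H (n + 1)).toLinearMap := by
  ext b : 2
  have hsingle : barChainsEquiv k H (n + 1) (Finsupp.single b 1) =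
      Finsupp.single (barBasisEquiv H (n + 1) b) 1 :=
    Finsupp.domLCongr_single _ _ _
  simp only [LinearMap.comp_apply, LinearEquiv.coe_coe, Finsupp.lsingle_apply, hsingle,
    barD_single, map_sum, map_smul, barChainsEquiv_barProj]
  rfl

lemma map_barCycles (n : ℕ) :
    (barCycles k K α n).map (barChainsEquiv k H n).toLinearMap = barCycles k K' α n := by
  cases n with
  | zero => exact (Submodule.map_top _).trans (barChainsEquiv k H 0).range
  | succ n => exact map_ker_of_comp_eq (barChainsEquiv_comp_barD k H n)

noncomputable def torEquivOfSameFaces (n : ℕ) : TorSR k K α n ≃ₗ[k] TorSR k K' α n :=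
  subquotientEquiv (barChainsEquiv k H n) (map_barCycles k H n)
    (map_range_of_comp_eq (barChainsEquiv_comp_barD k H n))

end SameFaces

theorem stmt2_general {V : Type} (K : Set (Finset V)) (J : Set V)
    (k : Type) [Field k] (α : V →₀ ℕ) (hα : ∀ i ∉ J, α i = 0) (n : ℕ) :
    Nonempty (TorSR k K α n ≃ₗ[k] TorSR k {s ∈ K | (s : Set V) ⊆ J} α n) := by
  have hsupp : (α.support : Set V) ⊆ J := fun i hi =>
    by_contra fun hiJ => Finsupp.mem_support_iff.mp hi (hα i hiJ)
  exact ⟨torEquivOfSameFaces k (K' := {s ∈ K | (s : Set V) ⊆ J})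
    (fun s hs => (and_iff_left ((Finset.coe_subset.mpr hs).trans hsupp)).symm) n⟩

/-- Restriction of multigraded Tor to a full subcomplex: if `K` is a simplicial complex on
the vertex set `V ⊇ J` and `α` is a multidegree with `αᵢ = 0` for `i ∉ J`, then
`Tor^{k[K]}_{n,2α}(k,k) ≅ Tor^{k[K_J]}_{n,2α}(k,k)`, where `K_J = {s ∈ K | s ⊆ J}` is the
full subcomplex of `K` on `J`. -/
theorem stmt2 {V : Type} (K : Set (Finset V)) (hK : IsComplexOn K) (J : Set V)
    (k : Type) [Field k] (α : V →₀ ℕ) (hα : ∀ i ∉ J, α i = 0) (n : ℕ) :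
    Nonempty (TorSR k K α n ≃ₗ[k] TorSR k {s ∈ K | (s : Set V) ⊆ J} α n) :=
  stmt2_general K J k α hα n
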